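/- Let μ > 0. For t ∈ ℝ and r > μ define u(t,r) = √(r-μ) · exp((r+t)/(2μ)), v(t,r) = √(r-μ) · exp((r-t)/(2μ)), and F(r) = (4μ²/r) · exp(-r/μ). Then for all t ∈ ℝ and r > μ: (i) u(t,r)·v(t,r) = (r-μ)·exp(r/μ); (ii) F(r) · (∂u/∂t)(t,r) · (∂v/∂t)(t,r) = -(1 - μ/r); (iii) F(r) · (∂u/∂r)(t,r) · (∂v/∂r)(t,r) = 1/(1 - μ/r); (iv) (∂u/∂t)(t,r)·(∂v/∂r)(t,r) + (∂u/∂r)(t,r)·(∂v/∂t)(t,r) = 0. Here ∂u/∂t denotes the derivative of t ↦ u(t,r) and ∂u/∂r the derivative of r ↦ u(t,r), and similarly for v. -/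

import Mathlib

/-- Kruskal-Szekeres coordinate `u` on the normal region. -/
noncomputable def uKS (μ t r : ℝ) : ℝ :=
  Real.sqrt (r - μ) * Real.exp ((r + t) / (2 * μ))

/-- Kruskal-Szekeres coordinate `v` on the normal region. -/
noncomputable def vKS (μ t r : ℝ) : ℝ :=
  Real.sqrt (r - μ) * Real.exp ((r - t) / (2 * μ))

/-- Kruskal-Szekeres conformal factor `F`. -/
noncomputable def FKS (μ r : ℝ) : ℝ :=
  (4 * μ ^ 2 / r) * Real.exp (-r / μ)

/-- The isometry identities between the normal region of the Hilbert-Droste plane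
and the Kruskal-Szekeres plane. -/
theorem kruskal_isometry_identities_normal_region (μ : ℝ) (hμ : 0 < μ)
    (t r : ℝ) (hr : μ < r) :
    uKS μ t r * vKS μ t r = (r - μ) * Real.exp (r / μ) ∧
    FKS μ r * deriv (fun t' => uKS μ t' r) t * deriv (fun t' => vKS μ t' r) t
      = -(1 - μ / r) ∧
    FKS μ r * deriv (fun r' => uKS μ t r') r * deriv (fun r' => vKS μ t r') r
      = 1 / (1 - μ / r) ∧
    deriv (fun t' => uKS μ t' r) t * deriv (fun r' => vKS μ t r') r
      + deriv (fun r' => uKS μ t r') r * deriv (fun t' => vKS μ t' r) t = 0 := by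
  have hrμ : (0:ℝ) < r - μ := by linarith
  have hr0 : (0:ℝ) < r := by linarith
  set s := Real.sqrt (r - μ) with hs
  have hspos : 0 < s := Real.sqrt_pos.mpr hrμ
  have hs2 : s ^ 2 = r - μ := Real.sq_sqrt hrμ.le
  set E1 := Real.exp ((r + t) / (2 * μ)) with hE1
  set E2 := Real.exp ((r - t) / (2 * μ)) with hE2
  set E := Real.exp (r / μ) with hE
  set Em := Real.exp (-r / μ) with hEm
  have hE12 : E1 * E2 = E := by
    rw [hE1, hE2, hE, ← Real.exp_add]
    congr 1
    field_simp
    ring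
  have hEmE : Em * E = 1 := by
    rw [hEm, hE, ← Real.exp_add, neg_div, neg_add_cancel, Real.exp_zero]
  have kEm : Em * E1 * E2 = 1 := by rw [mul_assoc, hE12, hEmE]
  -- derivatives in t
  have hut : HasDerivAt (fun t' => uKS μ t' r) (s * (E1 * (1 / (2 * μ)))) t := by
    have h1 : HasDerivAt (fun t' : ℝ => (r + t') / (2 * μ)) (1 / (2 * μ)) t :=
      ((hasDerivAt_id t).const_add r).div_const (2 * μ)
    exact h1.exp.const_mul s
  have hvt : HasDerivAt (fun t' => vKS μ t' r) (s * (E2 * (-1 / (2 * μ)))) t := by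
    have h1 : HasDerivAt (fun t' : ℝ => (r - t') / (2 * μ)) (-1 / (2 * μ)) t :=
      ((hasDerivAt_id t).const_sub r).div_const (2 * μ)
    exact h1.exp.const_mul s
  -- derivatives in r
  have hsr : HasDerivAt (fun r' => Real.sqrt (r' - μ)) (1 / (2 * s)) r := by
    have := ((hasDerivAt_id r).sub_const μ).sqrt (by positivity)
    simpa using this
  have hur : HasDerivAt (fun r' => uKS μ t r')
      (1 / (2 * s) * E1 + s * (E1 * (1 / (2 * μ)))) r := by
    have h1 : HasDerivAt (fun r' : ℝ => (r' + t) / (2 * μ)) (1 / (2 * μ)) r :=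
      ((hasDerivAt_id r).add_const t).div_const (2 * μ)
    exact hsr.mul h1.exp
  have hvr : HasDerivAt (fun r' => vKS μ t r')
      (1 / (2 * s) * E2 + s * (E2 * (1 / (2 * μ)))) r := by
    have h1 : HasDerivAt (fun r' : ℝ => (r' - t) / (2 * μ)) (1 / (2 * μ)) r :=
      ((hasDerivAt_id r).sub_const t).div_const (2 * μ)
    exact hsr.mul h1.exp
  rw [hut.deriv, hvt.deriv, hur.deriv, hvr.deriv]
  refine ⟨?_, ?_, ?_, ?_⟩
  · show s * E1 * (s * E2) = (r - μ) * E
    rw [← hE12, ← hs2]; ring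
  · show (4 * μ ^ 2 / r) * Em * (s * (E1 * (1 / (2 * μ)))) * (s * (E2 * (-1 / (2 * μ)))) = -(1 - μ / r)
    field_simp
    linear_combination (-4 * s ^ 2) * kEm + (-4) * hs2
  · show (4 * μ ^ 2 / r) * Em * (1 / (2 * s) * E1 + s * (E1 * (1 / (2 * μ)))) *
      (1 / (2 * s) * E2 + s * (E2 * (1 / (2 * μ)))) = 1 / (1 - μ / r)
    have h1r : 1 - μ / r = (r - μ) / r := by field_simp
    rw [h1r]
    field_simp
    linear_combination (4 * (r - μ) * (μ + s ^ 2) ^ 2) * kEm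
      + (4 * ((r - μ) * s ^ 2 - μ ^ 2)) * hs2
  · ring
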